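/- arXiv:2101.03039 — 10 statements merged into one kernel-verified Lean document; each statement's English description precedes it below -/
import Mathlib

section
/- The two-element join-semilattice 2 = {0,1} with 0 ≤ 1 is an injective object in the category of join-semilattices: if S is a sub-join-semilattice of a join-semilattice T, then every join-semilattice morphism f : S → 2 extends to a join-semilattice morphism g : T → 2. -/
/-- The two-element join-semilattice `Bool` (with `false ≤ true`) is injective in the
category of join-semilattices: any join-semilattice morphism defined on a
sub-join-semilattice `S` of `T` extends to all of `T`. -/
theorem bool_injective_jsl {T : Type*} [SemilatticeSup T] [OrderBot T] (S : Set T)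
    (hbot : (⊥ : T) ∈ S) (hsup : ∀ a ∈ S, ∀ b ∈ S, a ⊔ b ∈ S)
    (f : T → Bool)
    (hf_bot : f ⊥ = false)
    (hf_sup : ∀ a ∈ S, ∀ b ∈ S, f (a ⊔ b) = (f a || f b)) :
    ∃ g : T → Bool, g ⊥ = false ∧ (∀ a b : T, g (a ⊔ b) = (g a || g b)) ∧
      ∀ s ∈ S, g s = f s := by
  classical
  -- f is monotone on S
  have hmono : ∀ a ∈ S, ∀ b ∈ S, a ≤ b → f a = true → f b = true := by
    intro a ha b hb hab hfa
    have : f (a ⊔ b) = (f a || f b) := hf_sup a ha b hb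
    rw [sup_eq_right.mpr hab, hfa] at this
    simpa using this
  refine ⟨fun t => !decide (∃ s ∈ S, f s = false ∧ t ≤ s), ?_, ?_, ?_⟩
  · simp only [Bool.not_eq_false', decide_eq_true_eq]
    exact ⟨⊥, hbot, hf_bot, le_rfl⟩
  · intro a b
    have key : (∃ s ∈ S, f s = false ∧ a ⊔ b ≤ s) ↔
        (∃ s ∈ S, f s = false ∧ a ≤ s) ∧ (∃ s ∈ S, f s = false ∧ b ≤ s) := by
      constructor
      · rintro ⟨s, hs, hfs, hle⟩
        exact ⟨⟨s, hs, hfs, le_trans le_sup_left hle⟩,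
               ⟨s, hs, hfs, le_trans le_sup_right hle⟩⟩
      · rintro ⟨⟨s₁, hs₁, hfs₁, hle₁⟩, ⟨s₂, hs₂, hfs₂, hle₂⟩⟩
        refine ⟨s₁ ⊔ s₂, hsup _ hs₁ _ hs₂, ?_, sup_le_sup hle₁ hle₂⟩
        rw [hf_sup _ hs₁ _ hs₂, hfs₁, hfs₂]; rfl
    simp only []
    rw [show (∃ s ∈ S, f s = false ∧ a ⊔ b ≤ s) = _ from propext key]
    by_cases h1 : (∃ s ∈ S, f s = false ∧ a ≤ s) <;>
      by_cases h2 : (∃ s ∈ S, f s = false ∧ b ≤ s) <;> simp [h1, h2]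
  · intro s hs
    by_cases hfs : f s = false
    · have : ∃ s' ∈ S, f s' = false ∧ s ≤ s' := ⟨s, hs, hfs, le_rfl⟩
      simp [this, hfs]
    · have hft : f s = true := by simpa using hfs
      have : ¬ ∃ s' ∈ S, f s' = false ∧ s ≤ s' := by
        rintro ⟨s', hs', hfs', hle⟩
        rw [hmono s hs s' hs' hle hft] at hfs'
        exact absurd hfs' (by simp)
      simp [this, hft]
end

section
/- Let S be a sub-join-semilattice of a finite join-semilattice T and let F be a prime filter of S. Then T \ ↓(S \ F) is a prime filter of T extending F, where ↓X denotes the downward closure of X in T. -/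
/-!
The complement of `↓(S \ F)` is an upper set, and on `S` it is exactly `F` because `F` is upward
closed in `S`. For primality, note that `S \ F` contains `⊥` and is closed under `⊔`: this is the
primality of `F` for the empty and for two-element joins. Hence `S \ F` is directed, so a finite
family of elements each lying below some element of `S \ F` has its join below a single one.
-/

section

variable {α : Type*} [SemilatticeSup α] {S F : Set α}

lemma SupClosed.diff_of_prime (hS : SupClosed S)
    (hprime : ∀ a ∈ S, ∀ b ∈ S, a ⊔ b ∈ F → a ∈ F ∨ b ∈ F) : SupClosed (S \ F) :=
  fun a ha b hb ↦ ⟨hS ha.1 hb.1, fun hab ↦ (hprime a ha.1 b hb.1 hab).elim ha.2 hb.2⟩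

lemma mem_lowerClosure_diff_iff (hup : ∀ a ∈ F, ∀ b ∈ S, a ≤ b → b ∈ F) {s : α} (hs : s ∈ S) :
    s ∈ lowerClosure (S \ F) ↔ s ∉ F :=
  ⟨fun ⟨x, ⟨hxS, hxF⟩, hsx⟩ hsF ↦ hxF (hup s hsF x hxS hsx), fun hsF ↦ ⟨s, ⟨hs, hsF⟩, le_rfl⟩⟩

end

theorem primeFilter_extension_general {T : Type*} [SemilatticeSup T] [OrderBot T]
    (S : Set T)
    (hbot : (⊥ : T) ∈ S) (hsup : ∀ a ∈ S, ∀ b ∈ S, a ⊔ b ∈ S)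
    (F : Set T)
    (hup : ∀ a ∈ F, ∀ b ∈ S, a ≤ b → b ∈ F)
    (hprime : ∀ X : Finset T, ↑X ⊆ S → X.sup id ∈ F → ∃ x ∈ X, x ∈ F) :
    (∀ a ∈ {t : T | ∃ x ∈ S \ F, t ≤ x}ᶜ, ∀ b : T, a ≤ b → b ∈ {t : T | ∃ x ∈ S \ F, t ≤ x}ᶜ) ∧
    (∀ X : Finset T, X.sup id ∈ {t : T | ∃ x ∈ S \ F, t ≤ x}ᶜ →
      ∃ x ∈ X, x ∈ {t : T | ∃ x' ∈ S \ F, t ≤ x'}ᶜ) ∧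
    (∀ s ∈ S, (s ∈ {t : T | ∃ x ∈ S \ F, t ≤ x}ᶜ ↔ s ∈ F)) := by
  classical
  have hbot_notMem : (⊥ : T) ∉ F := fun h ↦ by simpa using hprime ∅ (by simp) h
  have hprime_pair : ∀ a ∈ S, ∀ b ∈ S, a ⊔ b ∈ F → a ∈ F ∨ b ∈ F := fun a ha b hb hab ↦ by
    obtain ⟨x, hx, hxF⟩ := hprime {a, b} (by simp [Set.insert_subset_iff, ha, hb]) (by simpa)
    rcases Finset.mem_insert.1 hx with rfl | hx
    · exact .inl hxF
    · exact .inr (Finset.mem_singleton.1 hx ▸ hxF)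
  have hdiff : SupClosed (S \ F) := SupClosed.diff_of_prime (fun a ha b hb ↦ hsup a ha b hb)
    hprime_pair
  refine ⟨fun a ha b hab ↦ (lowerClosure (S \ F)).lower.compl hab ha, fun X hX ↦ ?_,
    fun s hs ↦ not_iff_comm.1 (mem_lowerClosure_diff_iff hup hs).symm⟩
  by_contra! hall
  exact hX <| Finset.sup_le_of_le_directed (S \ F) ⟨⊥, hbot, hbot_notMem⟩ hdiff.directedOn X
    fun x hx ↦ not_not.1 (hall x hx)

/-- If `S` is a sub-join-semilattice of a finite join-semilattice `T` and `F` a prime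
filter of `S`, then `T \ ↓(S \ F)` is a prime filter of `T` extending `F`. -/
theorem primeFilter_extension {T : Type*} [SemilatticeSup T] [OrderBot T] [Fintype T]
    (S : Set T)
    (hbot : (⊥ : T) ∈ S) (hsup : ∀ a ∈ S, ∀ b ∈ S, a ⊔ b ∈ S)
    (F : Set T) (hFS : F ⊆ S)
    (hup : ∀ a ∈ F, ∀ b ∈ S, a ≤ b → b ∈ F)
    (hprime : ∀ X : Finset T, ↑X ⊆ S → X.sup id ∈ F → ∃ x ∈ X, x ∈ F) :
    (∀ a ∈ {t : T | ∃ x ∈ S \ F, t ≤ x}ᶜ, ∀ b : T, a ≤ b → b ∈ {t : T | ∃ x ∈ S \ F, t ≤ x}ᶜ) ∧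
    (∀ X : Finset T, X.sup id ∈ {t : T | ∃ x ∈ S \ F, t ≤ x}ᶜ →
      ∃ x ∈ X, x ∈ {t : T | ∃ x' ∈ S \ F, t ≤ x'}ᶜ) ∧
    (∀ s ∈ S, (s ∈ {t : T | ∃ x ∈ S \ F, t ≤ x}ᶜ ↔ s ∈ F)) :=
  primeFilter_extension_general S hbot hsup F hup hprime
end

section
/- If e : S → S' is a surjective join-semilattice morphism between finite join-semilattices, then the number of join-irreducible elements of S' is at most the number of join-irreducible elements of S. -/
-- A surjective join-semilattice morphism between finite join-semilattices cannot
-- increase the number of join-irreducible elements.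
open Classical in
theorem card_supIrred_le_of_surjective {S S' : Type*}
    [SemilatticeSup S] [OrderBot S] [Fintype S]
    [SemilatticeSup S'] [OrderBot S'] [Fintype S']
    (e : S → S') (he : Function.Surjective e)
    (hsup : ∀ a b : S, e (a ⊔ b) = e a ⊔ e b) (hbot : e ⊥ = ⊥) :
    Fintype.card {j : S' // SupIrred j} ≤ Fintype.card {j : S // SupIrred j} := by
  have hmap : ∀ s : Finset S, e (s.sup id) = s.sup e := by
    intro s
    induction s using Finset.induction with
    | empty => simpa using hbot
    | insert _ _ _ ih => simp [hsup, ih]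
  have key : ∀ j' : S', SupIrred j' → ∃ j : S, SupIrred j ∧ e j = j' := by
    intro j' hj'
    obtain ⟨x, rfl⟩ := he j'
    obtain ⟨s, hs, hirr⟩ := exists_supIrred_decomposition x
    obtain ⟨i, hi, hie⟩ := hj'.finset_sup_eq (f := e) (by rw [← hmap, hs])
    exact ⟨i, hirr hi, hie⟩
  have : ∀ j' : {j : S' // SupIrred j}, ∃ j : {j : S // SupIrred j}, e j = j' :=
    fun ⟨j', hj'⟩ => by
      obtain ⟨j, hj, hje⟩ := key j' hj'
      exact ⟨⟨j, hj⟩, hje⟩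
  choose f hf using this
  exact Fintype.card_le_of_injective f fun a b hab => by
    have := (hf a).symm.trans (congrArg e (congrArg Subtype.val hab)) |>.trans (hf b)
    exact Subtype.ext this
end

section
/- Let N = (Q, δ, I, F) be a nondeterministic finite automaton. The map X ↦ Q \ X is an isomorphism of deterministic automata over join-semilattices from the dual of the subset automaton of N to the subset automaton of the reverse automaton of N. In particular: (a) Q\F is mapped to F (initial states correspond); (b) X is 'final' in the dual (i.e., ¬(I ⊆ X)) iff (Q\X) ∩ I ≠ ∅; (c) for the transition relation: the largest Y with δₐ[Y] ⊆ X has complement equal to {q : δₐ[{q}] ∩ (Q\X) ≠ ∅}. -/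
/-- For an nfa `N = (Q, δ, I, F)`, complementation `X ↦ Q \ X` is an isomorphism of
join-semilattice dfas from the dual of the subset automaton of `N` to the subset
automaton of the reverse of `N`: it is an order-reversing bijection, (a) it maps the
dual's initial state `Q \ F` (the largest non-final state) to `F`; (b) a state `X` is
final in the dual (`¬ I ⊆ X`) iff its complement is final in `P(rev N)`
(`Xᶜ ∩ I ≠ ∅`); and (c) the dual `a`-transition (sending `X` to the largest `Y` with
`δₐ[Y] ⊆ X`) has complement the reverse-`a`-image of `Xᶜ`. -/
theorem powersetDual_iso_powersetReverse {Q α : Type*} [Fintype Q]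
    (δ : α → Q → Q → Prop) (I F : Set Q) :
    Function.Bijective (fun X : Set Q => Xᶜ) ∧
    (∀ X Y : Set Q, X ⊆ Y ↔ Yᶜ ⊆ Xᶜ) ∧
    (Fᶜ)ᶜ = F ∧
    (∀ X : Set Q, ¬ I ⊆ X ↔ (Xᶜ ∩ I).Nonempty) ∧
    (∀ (a : α) (X : Set Q),
      IsGreatest {Y : Set Q | {q' | ∃ q ∈ Y, δ a q q'} ⊆ X}
        {q | ∀ q', δ a q q' → q' ∈ X} ∧
      ({q | ∀ q', δ a q q' → q' ∈ X})ᶜ = {q | ∃ q', δ a q q' ∧ q' ∈ Xᶜ}) := by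
  refine ⟨⟨fun X Y h => by simpa using congrArg compl h, fun X => ⟨Xᶜ, by simp⟩⟩,
    fun X Y => Set.compl_subset_compl.symm, by simp, fun X => ?_,
    fun a X => ⟨⟨?_, ?_⟩, ?_⟩⟩
  · rw [Set.not_subset]
    constructor
    · rintro ⟨q, hI, hX⟩; exact ⟨q, hX, hI⟩
    · rintro ⟨q, hX, hI⟩; exact ⟨q, hI, hX⟩
  · rintro q' ⟨q, hq, hδ⟩
    exact hq q' hδ
  · rintro Y hY q hq q' hδ
    exact hY ⟨q, hq, hδ⟩
  · ext q
    simp [not_forall]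
end

section
/- Let A = (S, δ, s₀, F) be a deterministic automaton on a finite join-semilattice with semilattice-morphism transitions δₐ and prime filter F of final states. In the dual automaton Aᵒᵖ, a state s accepts exactly the words w such that δ_{rev(w)}(s₀) is not ≤ s in S. -/
/-- Running a deterministic automaton: apply the letters of the word in order. -/
def run {α S : Type*} (δ : α → S → S) : List α → S → S
  | [], s => s
  | a :: w, s => run δ w (δ a s)

/-- For a JSL-dfa `A = (S, δ, s₀, F)` (finite join-semilattice `S`, join-morphism
transitions, prime filter `F` of final states) with adjoint transitions `δ*`
(`δₐ x ≤ y ↔ x ≤ δₐ* y`), a state `s` of the dual automaton `Aᵒᵖ` (whose final states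
are `{t | ¬ s₀ ≤ t}`) accepts exactly the words `w` with `δ_{rev w}(s₀) ≰ s`. -/
theorem dual_state_accepts {α S : Type*} [SemilatticeSup S] [OrderBot S] [Fintype S]
    (δ : α → S → S)
    (hsup : ∀ (a : α) (x y : S), δ a (x ⊔ y) = δ a x ⊔ δ a y)
    (hbot : ∀ a : α, δ a ⊥ = ⊥)
    (s₀ : S) (F : Set S)
    (hup : ∀ x ∈ F, ∀ y : S, x ≤ y → y ∈ F)
    (hprime : ∀ X : Finset S, X.sup id ∈ F → ∃ x ∈ X, x ∈ F)
    (δstar : α → S → S)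
    (hadj : ∀ (a : α) (x y : S), δ a x ≤ y ↔ x ≤ δstar a y) :
    ∀ (s : S) (w : List α),
      (¬ s₀ ≤ run δstar w s) ↔ ¬ run δ w.reverse s₀ ≤ s := by
  have happ : ∀ (u v : List α) (s : S), run δ (u ++ v) s = run δ v (run δ u s) := by
    intro u; induction u with
    | nil => intro v s; rfl
    | cons a u ih => intro v s; simp [run, ih]
  have key : ∀ (w : List α) (s : S), run δ w.reverse s₀ ≤ s ↔ s₀ ≤ run δstar w s := by
    intro w; induction w with
    | nil => intro s; simp [run]
    | cons a w ih =>
      intro s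
      have : (a :: w).reverse = w.reverse ++ [a] := by simp
      rw [this, happ]
      simp only [run]
      rw [hadj, ih]
  intro s w
  exact not_congr (key w s).symm
end

section
/- A language L ⊆ Σ* is bideterministic (equivalently, accepted by a dfa whose reverse is again deterministic) if and only if the left derivatives of L are pairwise disjoint: for all u, v ∈ Σ*, either u⁻¹L = v⁻¹L or u⁻¹L ∩ v⁻¹L = ∅. In that case, the set of all finite unions of left derivatives of L, ordered by inclusion, forms a Boolean algebra whose atoms are the nonempty left derivatives. -/
/-- The left derivative `u⁻¹L = {w : uw ∈ L}`. -/
def leftDeriv {α : Type*} (u : List α) (L : Set (List α)) : Set (List α) :=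
  {w | u ++ w ∈ L}

/-- Relational run of an nfa with transition relation `δ`. -/
def nfaRun {α Q : Type*} (δ : α → Q → Q → Prop) : List α → Q → Q → Prop
  | [], q, q' => q = q'
  | a :: w, q, q' => ∃ p, δ a q p ∧ nfaRun δ w p q'

/-- `L` is bideterministic: it is accepted by a finite automaton which is
deterministic (at most one initial state, deterministic transitions) and whose
reverse is again deterministic (at most one final state, backwards-deterministic
transitions). -/
def Bideterministic {α : Type*} (L : Set (List α)) : Prop :=
  ∃ (Q : Type) (δ : α → Q → Q → Prop) (I F : Set Q),
    Finite Q ∧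
    (∀ w : List α, w ∈ L ↔ ∃ q ∈ I, ∃ q' ∈ F, nfaRun δ w q q') ∧
    I.Subsingleton ∧ (∀ (a : α) (q : Q), {q' | δ a q q'}.Subsingleton) ∧
    F.Subsingleton ∧ (∀ (a : α) (q' : Q), {q | δ a q q'}.Subsingleton)

/-- The join-semilattice of all finite unions of left derivatives of `L`. -/
def Qset {α : Type*} (L : Set (List α)) : Set (Set (List α)) :=
  {M | ∃ s : Finset (List α), M = ⋃ u ∈ s, leftDeriv u L}

/-!
A bideterministic automaton is forward deterministic, so `u⁻¹L` is the language of the state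
reached by `u`; it is backward deterministic with a single final state, so a common word
`w ∈ u⁻¹L ∩ v⁻¹L` forces `u` and `v` to reach the same state. Conversely, if the left
derivatives are pairwise disjoint, the nonempty left derivatives (finitely many, by
Myhill–Nerode) with the transitions `D ↦ a⁻¹D` form a bideterministic automaton: a predecessor
of a nonempty derivative `D'` under `a` contains `a w` for every `w ∈ D'`, so disjointness
determines it. The same disjointness puts every left derivative either inside or outside a
finite union of left derivatives, which makes these unions closed under intersection and
difference.
-/

section

variable {α : Type*}

section Runs

variable {Q : Type*} {δ : α → Q → Q → Prop}

theorem nfaRun_append (u v : List α) (q q'' : Q) :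
    nfaRun δ (u ++ v) q q'' ↔ ∃ q', nfaRun δ u q q' ∧ nfaRun δ v q' q'' := by
  induction u generalizing q with
  | nil => simp [nfaRun]
  | cons a u ih =>
    simp only [List.cons_append, nfaRun, ih]
    constructor
    · rintro ⟨p, hp, q', hu, hv⟩
      exact ⟨q', ⟨p, hp, hu⟩, hv⟩
    · rintro ⟨q', ⟨p, hp, hu⟩, hv⟩
      exact ⟨p, hp, q', hu, hv⟩

theorem nfaRun_right_unique (hδ : ∀ a q, {q' | δ a q q'}.Subsingleton) {w : List α}
    {q q₁ q₂ : Q} (h₁ : nfaRun δ w q q₁) (h₂ : nfaRun δ w q q₂) : q₁ = q₂ := by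
  induction w generalizing q with
  | nil => exact h₁.symm.trans h₂
  | cons a w ih =>
    obtain ⟨p₁, hp₁, h₁⟩ := h₁
    obtain ⟨p₂, hp₂, h₂⟩ := h₂
    cases hδ a q hp₁ hp₂
    exact ih h₁ h₂

theorem nfaRun_left_unique (hδ : ∀ a q', {q | δ a q q'}.Subsingleton) {w : List α}
    {q₁ q₂ q : Q} (h₁ : nfaRun δ w q₁ q) (h₂ : nfaRun δ w q₂ q) : q₁ = q₂ := by
  induction w generalizing q₁ q₂ with
  | nil => exact h₁.trans h₂.symm
  | cons a w ih =>
    obtain ⟨p₁, hp₁, h₁⟩ := h₁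
    obtain ⟨p₂, hp₂, h₂⟩ := h₂
    cases ih h₁ h₂
    exact hδ a p₁ hp₁ hp₂

theorem nfaRun_comap {Q' : Type*} {f : Q' → Q} (hf : f.Bijective) (w : List α) (p q : Q') :
    nfaRun (fun a p q => δ a (f p) (f q)) w p q ↔ nfaRun δ w (f p) (f q) := by
  induction w generalizing p with
  | nil => exact ⟨congrArg f, fun h => hf.injective h⟩
  | cons a w ih => simp only [nfaRun, ih, hf.surjective.exists]

end Runs

-- `Bideterministic` asks for states in `Type`; this moves a finite state type of any universe
-- there, along an equivalence with `Fin n`.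
theorem bideterministic_of_finite {L : Set (List α)} {Q : Type*} [Finite Q]
    (δ : α → Q → Q → Prop) (I F : Set Q)
    (hL : ∀ w, w ∈ L ↔ ∃ q ∈ I, ∃ q' ∈ F, nfaRun δ w q q') (hI : I.Subsingleton)
    (hδ : ∀ a q, {q' | δ a q q'}.Subsingleton) (hF : F.Subsingleton)
    (hδ' : ∀ a q', {q | δ a q q'}.Subsingleton) : Bideterministic L := by
  set f := (Finite.equivFin Q).symm
  refine ⟨_, fun a p q => δ a (f p) (f q), f ⁻¹' I, f ⁻¹' F, inferInstance, fun w => ?_,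
    hI.preimage f.injective, fun a q => (hδ a (f q)).preimage f.injective,
    hF.preimage f.injective, fun a q' => (hδ' a (f q')).preimage f.injective⟩
  simp only [hL, Set.mem_preimage, nfaRun_comap f.bijective, f.surjective.exists]

theorem leftDeriv_append (u v : List α) (L : Set (List α)) :
    leftDeriv (u ++ v) L = leftDeriv v (leftDeriv u L) := by
  ext w
  simp [leftDeriv, List.append_assoc]

theorem Set.Nonempty.of_leftDeriv {u : List α} {L : Set (List α)}
    (h : (leftDeriv u L).Nonempty) : L.Nonempty :=
  let ⟨w, hw⟩ := h; ⟨u ++ w, hw⟩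

def LeftDerivsDisjoint (L : Set (List α)) : Prop :=
  ∀ ⦃u v w⦄, w ∈ leftDeriv u L → w ∈ leftDeriv v L → leftDeriv u L = leftDeriv v L

theorem leftDerivsDisjoint_iff (L : Set (List α)) :
    LeftDerivsDisjoint L ↔
      ∀ u v, leftDeriv u L = leftDeriv v L ∨ leftDeriv u L ∩ leftDeriv v L = ∅ := by
  refine ⟨fun hL u v => ?_, fun hL u v w hu hv => (hL u v).resolve_right ?_⟩
  · rw [or_iff_not_imp_right, ← Set.not_nonempty_iff_eq_empty, not_not]
    exact fun ⟨w, hu, hv⟩ => hL hu hv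
  · exact Set.nonempty_iff_ne_empty.mp ⟨w, hu, hv⟩

theorem leftDeriv_eq_of_nfaRun {L : Set (List α)} {Q : Type*} {δ : α → Q → Q → Prop}
    {I F : Set Q} (hL : ∀ w, w ∈ L ↔ ∃ q ∈ I, ∃ q' ∈ F, nfaRun δ w q q')
    (hI : I.Subsingleton) (hδ : ∀ a q, {q' | δ a q q'}.Subsingleton) {u : List α} {q₀ q : Q}
    (hq₀ : q₀ ∈ I) (hu : nfaRun δ u q₀ q) :
    leftDeriv u L = {w | ∃ q' ∈ F, nfaRun δ w q q'} := by
  ext w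
  simp only [leftDeriv, Set.mem_ofPred_eq, hL, nfaRun_append]
  constructor
  · rintro ⟨p₀, hp₀, q', hq', r, hr, hw⟩
    cases hI hp₀ hq₀
    cases nfaRun_right_unique hδ hr hu
    exact ⟨q', hq', hw⟩
  · rintro ⟨q', hq', hw⟩
    exact ⟨q₀, hq₀, q', hq', q, hu, hw⟩

theorem Bideterministic.leftDerivsDisjoint {L : Set (List α)} (h : Bideterministic L) :
    LeftDerivsDisjoint L := by
  intro u v w hu hv
  obtain ⟨Q, δ, I, F, -, hL, hI, hδ, hF, hδ'⟩ := h
  obtain ⟨p, hp, f, hf, huw⟩ := (hL _).mp hu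
  obtain ⟨p', hp', f', hf', hvw⟩ := (hL _).mp hv
  obtain ⟨r, hur, hrw⟩ := (nfaRun_append u w _ _).mp huw
  obtain ⟨r', hvr', hr'w⟩ := (nfaRun_append v w _ _).mp hvw
  cases hF hf hf'
  cases nfaRun_left_unique hδ' hrw hr'w
  rw [leftDeriv_eq_of_nfaRun hL hI hδ hp hur, leftDeriv_eq_of_nfaRun hL hI hδ hp' hvr']

abbrev NonemptyLeftDeriv (L : Set (List α)) : Type _ :=
  {D : Set (List α) // (∃ u, leftDeriv u L = D) ∧ D.Nonempty}

namespace NonemptyLeftDeriv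

def step (L : Set (List α)) (a : α) (D D' : NonemptyLeftDeriv L) : Prop :=
  D'.1 = leftDeriv [a] D.1

variable {L : Set (List α)}

theorem nfaRun_step_iff (w : List α) (D D' : NonemptyLeftDeriv L) :
    nfaRun (step L) w D D' ↔ D'.1 = leftDeriv w D.1 := by
  induction w generalizing D with
  | nil => exact ⟨fun h => h ▸ rfl, fun h => (Subtype.ext h).symm⟩
  | cons a w ih =>
    simp only [nfaRun, step, ih]
    rw [show a :: w = [a] ++ w from rfl, leftDeriv_append [a] w]
    constructor
    · rintro ⟨P, hP, hD'⟩
      rw [hD', hP]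
    · intro hD'
      obtain ⟨u, hu⟩ := D.2.1
      have hne : (leftDeriv [a] D.1).Nonempty := (hD' ▸ D'.2.2 :).of_leftDeriv
      exact ⟨⟨_, ⟨u ++ [a], by rw [leftDeriv_append, hu]⟩, hne⟩, rfl, hD'⟩

theorem finite (hfin : (Set.range fun u => leftDeriv u L).Finite) :
    Finite (NonemptyLeftDeriv L) :=
  (hfin.subset fun _ hD => hD.1).to_subtype

end NonemptyLeftDeriv

theorem LeftDerivsDisjoint.bideterministic {L : Set (List α)} (hL : LeftDerivsDisjoint L)
    (hfin : (Set.range fun u => leftDeriv u L).Finite) : Bideterministic L := by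
  have := NonemptyLeftDeriv.finite hfin
  have eq_of_mem {D₁ D₂ : NonemptyLeftDeriv L} {w : List α} (h₁ : w ∈ D₁.1)
      (h₂ : w ∈ D₂.1) : D₁ = D₂ := by
    obtain ⟨_, ⟨u, rfl⟩, _⟩ := D₁
    obtain ⟨_, ⟨v, rfl⟩, _⟩ := D₂
    exact Subtype.ext (hL h₁ h₂)
  refine bideterministic_of_finite (NonemptyLeftDeriv.step L) {D | D.1 = L} {D | [] ∈ D.1}
    (fun w => ?_) (fun D₁ h₁ D₂ h₂ => Subtype.ext (h₁.trans h₂.symm))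
    (fun a D D₁ h₁ D₂ h₂ => Subtype.ext (h₁.trans h₂.symm))
    (fun D₁ h₁ D₂ h₂ => eq_of_mem h₁ h₂) (fun a D' D₁ h₁ D₂ h₂ => ?_)
  · simp only [Set.mem_ofPred_eq, NonemptyLeftDeriv.nfaRun_step_iff]
    constructor
    · intro hw
      have hnil : [] ∈ leftDeriv w L := by simpa [leftDeriv]
      exact ⟨⟨L, ⟨[], rfl⟩, w, hw⟩, rfl, ⟨_, ⟨w, rfl⟩, [], hnil⟩, hnil, rfl⟩
    · rintro ⟨D, hD, D', hD', hD'w⟩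
      rw [hD'w, hD] at hD'
      simpa [leftDeriv] using hD'
  · obtain ⟨w, hw⟩ := D'.2.2
    exact eq_of_mem (w := [a] ++ w) (h₁ ▸ hw : w ∈ leftDeriv [a] D₁.1)
      (h₂ ▸ hw : w ∈ leftDeriv [a] D₂.1)

section Qset

variable {L : Set (List α)}

theorem leftDeriv_mem_Qset (u : List α) : leftDeriv u L ∈ Qset L := ⟨{u}, by simp⟩

theorem union_mem_Qset {M K : Set (List α)} (hM : M ∈ Qset L) (hK : K ∈ Qset L) :
    M ∪ K ∈ Qset L := by
  classical
  obtain ⟨s, rfl⟩ := hM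
  obtain ⟨t, rfl⟩ := hK
  exact ⟨s ∪ t, (Finset.set_biUnion_union _ _ _).symm⟩

theorem iUnion_leftDeriv_mem_Qset (hfin : (Set.range fun u => leftDeriv u L).Finite) :
    (⋃ u, leftDeriv u L) ∈ Qset L := by
  classical
  refine ⟨hfin.toFinset.image (Function.invFun fun u : List α => leftDeriv u L), ?_⟩
  refine (Set.iUnion_subset fun u => ?_).antisymm
    (Set.iUnion₂_subset fun v _ => Set.subset_iUnion (fun u => leftDeriv u L) v)
  have hu : leftDeriv u L ∈ Set.range fun u => leftDeriv u L := ⟨u, rfl⟩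
  rw [← Function.invFun_eq hu]
  exact Finset.subset_set_biUnion_of_mem (f := (leftDeriv · L))
    (Finset.mem_image_of_mem _ (hfin.mem_toFinset.mpr hu))

variable (hL : LeftDerivsDisjoint L)
include hL

theorem LeftDerivsDisjoint.leftDeriv_subset_of_mem {K : Set (List α)} (hK : K ∈ Qset L)
    {u w : List α} (hwu : w ∈ leftDeriv u L) (hwK : w ∈ K) : leftDeriv u L ⊆ K := by
  obtain ⟨s, rfl⟩ := hK
  obtain ⟨v, hv, hwv⟩ := Set.mem_iUnion₂.mp hwK
  rw [hL hwu hwv]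
  exact Finset.subset_set_biUnion_of_mem (f := (leftDeriv · L)) hv

theorem LeftDerivsDisjoint.inter_mem_Qset {M K : Set (List α)} (hM : M ∈ Qset L)
    (hK : K ∈ Qset L) : M ∩ K ∈ Qset L := by
  classical
  obtain ⟨s, rfl⟩ := hM
  refine ⟨s.filter (leftDeriv · L ⊆ K), Set.ext fun w => ?_⟩
  simp only [Set.mem_inter_iff, Set.mem_iUnion, Finset.mem_filter, exists_prop]
  constructor
  · rintro ⟨⟨u, hu, hwu⟩, hwK⟩
    exact ⟨u, ⟨hu, hL.leftDeriv_subset_of_mem hK hwu hwK⟩, hwu⟩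
  · rintro ⟨u, ⟨hu, hsub⟩, hwu⟩
    exact ⟨⟨u, hu, hwu⟩, hsub hwu⟩

theorem LeftDerivsDisjoint.sdiff_mem_Qset {M K : Set (List α)} (hM : M ∈ Qset L)
    (hK : K ∈ Qset L) : M \ K ∈ Qset L := by
  classical
  obtain ⟨s, rfl⟩ := hM
  refine ⟨s.filter (¬ leftDeriv · L ⊆ K), Set.ext fun w => ?_⟩
  simp only [Set.mem_sdiff, Set.mem_iUnion, Finset.mem_filter, exists_prop]
  constructor
  · rintro ⟨⟨u, hu, hwu⟩, hwK⟩
    exact ⟨u, ⟨hu, fun hsub => hwK (hsub hwu)⟩, hwu⟩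
  · rintro ⟨u, ⟨hu, hnsub⟩, hwu⟩
    exact ⟨⟨u, hu, hwu⟩, fun hwK => hnsub (hL.leftDeriv_subset_of_mem hK hwu hwK)⟩

theorem LeftDerivsDisjoint.qset_atom_iff (M : Set (List α)) :
    (M ∈ Qset L ∧ M ≠ ∅ ∧ ∀ M' ∈ Qset L, M' ⊆ M → M' = ∅ ∨ M' = M) ↔
      ∃ u, M = leftDeriv u L ∧ M ≠ ∅ := by
  constructor
  · rintro ⟨⟨s, rfl⟩, hne, hmin⟩
    obtain ⟨w, hw⟩ := Set.nonempty_iff_ne_empty.mpr hne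
    obtain ⟨u, hu, hwu⟩ := Set.mem_iUnion₂.mp hw
    obtain h | h := hmin _ (leftDeriv_mem_Qset u)
      (Finset.subset_set_biUnion_of_mem (f := (leftDeriv · L)) hu)
    · exact absurd (h ▸ hwu) (Set.notMem_empty w)
    · exact ⟨u, h.symm, hne⟩
  · rintro ⟨u, rfl, hne⟩
    refine ⟨leftDeriv_mem_Qset u, hne, fun M' hM' hsub => ?_⟩
    obtain h | ⟨w, hw⟩ := M'.eq_empty_or_nonempty
    · exact .inl h
    · exact .inr (hsub.antisymm (hL.leftDeriv_subset_of_mem hM' (hsub hw) hw))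

end Qset

end

/-- A regular language `L` is bideterministic iff its left derivatives are pairwise
disjoint; in that case the finite unions of left derivatives form a Boolean algebra
(closed under binary unions, intersections and relative complements with respect to
the top element `⋃_u u⁻¹L`) whose atoms are exactly the nonempty left derivatives. -/
theorem bideterministic_iff_derivatives_disjoint {α : Type*} (L : Set (List α))
    (hreg : ∃ (n : ℕ) (M : DFA α (Fin n)), ∀ w : List α, w ∈ M.accepts ↔ w ∈ L) :
    (Bideterministic L ↔
      ∀ u v : List α, leftDeriv u L = leftDeriv v L ∨ leftDeriv u L ∩ leftDeriv v L = ∅) ∧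
    ((∀ u v : List α,
        leftDeriv u L = leftDeriv v L ∨ leftDeriv u L ∩ leftDeriv v L = ∅) →
      ((∀ M₁ ∈ Qset L, ∀ M₂ ∈ Qset L, M₁ ∪ M₂ ∈ Qset L) ∧
       (∀ M₁ ∈ Qset L, ∀ M₂ ∈ Qset L, M₁ ∩ M₂ ∈ Qset L) ∧
       (∀ M ∈ Qset L, (⋃ u : List α, leftDeriv u L) \ M ∈ Qset L) ∧
       (∀ M : Set (List α),
         (M ∈ Qset L ∧ M ≠ ∅ ∧ ∀ M' ∈ Qset L, M' ⊆ M → M' = ∅ ∨ M' = M) ↔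
         (∃ u : List α, M = leftDeriv u L ∧ M ≠ ∅)))) := by
  obtain ⟨n, M, hM⟩ := hreg
  have hfin : (Set.range fun u => leftDeriv u L).Finite :=
    Language.IsRegular.finite_range_leftQuotient ⟨Fin n, inferInstance, M, Set.ext hM⟩
  simp only [← leftDerivsDisjoint_iff]
  exact ⟨⟨Bideterministic.leftDerivsDisjoint, fun hL => hL.bideterministic hfin⟩,
    fun hL => ⟨fun _ hM _ hK => union_mem_Qset hM hK, fun _ hM _ hK => hL.inter_mem_Qset hM hK,
      fun _ hK => hL.sdiff_mem_Qset (iUnion_leftDeriv_mem_Qset hfin) hK, hL.qset_atom_iff⟩⟩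
end

section
/- A finite distributive lattice has exactly as many join-irreducible elements as the length of its longest strictly ascending chain. -/
open Finset

/-- In any finite partial order `J`, there is a strict chain of lower sets of length
`Fintype.card J`. -/
lemma exists_lowerSet_chain (J : Type*) [PartialOrder J] [Fintype J] :
    ∃ c : Fin (Fintype.card J + 1) → LowerSet J, StrictMono c := by
  classical
  -- linear extension and its enumeration
  let L := LinearExtension J
  haveI : Fintype L := ‹Fintype J›
  set m := Fintype.card J with hm
  have hmL : Fintype.card L = m := hm ▸ Fintype.card_congr (Equiv.cast rfl)
  let g : L ≃o Fin m := (monoEquivOfFin L hmL).symm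
  let f : J → Fin m := fun x => g (toLinearExtension x)
  have hf_mono : ∀ {x y : J}, x ≤ y → f x ≤ f y := fun h =>
    g.monotone (toLinearExtension.monotone h)
  have hf_surj : Function.Surjective f := by
    have hinj : Function.Injective f := fun a b hab => g.injective hab
    exact ((Fintype.bijective_iff_injective_and_card f).mpr
      ⟨hinj, by simp [hmL, hm]⟩).surjective
  refine ⟨fun i => ⟨{x | (f x : ℕ) < (i : ℕ)}, fun a b hba ha => lt_of_le_of_lt
    (Nat.le_of_lt_succ (Nat.lt_succ_of_le (hf_mono hba))) ha⟩, ?_⟩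
  intro i j hij
  constructor
  · intro a ha
    exact lt_of_lt_of_le ha (Nat.le_of_lt (by exact_mod_cast hij))
  · intro hle
    -- find x with f x = i
    have hi : (i : ℕ) < m := lt_of_lt_of_le (by exact_mod_cast hij) (Nat.lt_succ_iff.mp j.isLt)
    obtain ⟨x, hx⟩ := hf_surj ⟨i, hi⟩
    have hxj : (f x : ℕ) < (j : ℕ) := by rw [hx]; exact_mod_cast hij
    have h2 : (f x : ℕ) < (i : ℕ) := hle hxj
    rw [hx] at h2
    exact lt_irrefl _ h2

/-- A finite distributive lattice has exactly as many join-irreducible elements as the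
length of its longest strictly ascending chain: the number of join-irreducibles is the
greatest `n` such that there is a strict chain `x₀ < x₁ < ... < xₙ`. -/
theorem card_supIrred_eq_length {S : Type*} [DistribLattice S] [Fintype S] [Nonempty S] :
    IsGreatest {n : ℕ | ∃ c : Fin (n + 1) → S, StrictMono c}
      (Nat.card {j : S // SupIrred j}) := by
  classical
  haveI : OrderBot S := Fintype.toOrderBot S
  set J := {j : S // SupIrred j}
  haveI : Fintype J := Subtype.fintype _
  let e : S ≃o LowerSet J := OrderIso.lowerSetSupIrred
  have hcard : Nat.card J = Fintype.card J := Nat.card_eq_fintype_card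
  constructor
  · -- membership: build the chain
    obtain ⟨c, hc⟩ := exists_lowerSet_chain J
    rw [hcard]
    exact ⟨fun i => e.symm (c i), fun a b hab => e.symm.strictMono (hc hab)⟩
  · -- upper bound
    rintro n ⟨c, hc⟩
    rw [hcard]
    -- the map i ↦ card of the lower set e (c i) is strictly monotone into [0, card J]
    let g : Fin (n + 1) → ℕ := fun i => ((e (c i) : Set J)).toFinset.card
    have hg : StrictMono g := by
      intro i j hij
      have hlt : e (c i) < e (c j) := e.strictMono (hc hij)
      have hss : ((e (c i) : Set J)).toFinset ⊂ ((e (c j) : Set J)).toFinset := by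
        rw [Set.toFinset_ssubset_toFinset]
        exact_mod_cast hlt
      exact Finset.card_lt_card hss
    have hle : ∀ i, g i ≤ Fintype.card J := fun i =>
      le_trans (Finset.card_le_card (Finset.subset_univ _)) Finset.card_univ.le
    have key : ∀ k (hk : k < n + 1), k ≤ g ⟨k, hk⟩ := by
      intro k
      induction k with
      | zero => intro _; exact Nat.zero_le _
      | succ k ih =>
        intro hk
        have hk' : k < n + 1 := Nat.lt_of_succ_lt hk
        have : g ⟨k, hk'⟩ < g ⟨k + 1, hk⟩ := hg (by simp [Fin.lt_def])
        exact le_trans (Nat.succ_le_of_lt (lt_of_le_of_lt (ih hk') this)) (le_refl _)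
    have := key n (Nat.lt_succ_self n)
    calc n ≤ g ⟨n, Nat.lt_succ_self n⟩ := this
      _ ≤ Fintype.card J := hle _
end

section
/- Any retract of a finite distributive lattice in the category of join-semilattices is distributive: if D is a finite distributive lattice, S a finite join-semilattice (hence a lattice), and there are join-semilattice morphisms m : S → D and e : D → S with e ∘ m = id_S, then S is a distributive lattice. -/
/-- A retract of a finite distributive lattice in the category of join-semilattices is
distributive: if `m : S → D` and `e : D → S` are join-semilattice morphisms with
`e ∘ m = id`, and `D` is a finite distributive lattice, then the finite lattice `S` is
distributive. -/
theorem distrib_of_retract {D S : Type*}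
    [DistribLattice D] [Fintype D] [OrderBot D]
    [Lattice S] [Fintype S] [OrderBot S]
    (m : S → D) (e : D → S)
    (hm_sup : ∀ a b : S, m (a ⊔ b) = m a ⊔ m b) (hm_bot : m ⊥ = ⊥)
    (he_sup : ∀ a b : D, e (a ⊔ b) = e a ⊔ e b) (he_bot : e ⊥ = ⊥)
    (hretract : e ∘ m = id) :
    ∀ a b c : S, a ⊓ (b ⊔ c) = (a ⊓ b) ⊔ (a ⊓ c) := by
  have hem : ∀ s : S, e (m s) = s := fun s => congrFun hretract s
  have hm_mono : Monotone m := fun x y hxy => by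
    have : m y = m x ⊔ m y := by rw [← hm_sup, sup_eq_right.mpr hxy]
    exact le_sup_left.trans this.ge
  have he_mono : Monotone e := fun x y hxy => by
    have : e y = e x ⊔ e y := by rw [← he_sup, sup_eq_right.mpr hxy]
    exact le_sup_left.trans this.ge
  intro a b c
  refine le_antisymm ?_ le_inf_sup
  calc a ⊓ (b ⊔ c) = e (m (a ⊓ (b ⊔ c))) := (hem _).symm
    _ ≤ e (m a ⊓ (m b ⊔ m c)) := by
        refine he_mono (le_inf ?_ ?_)
        · exact hm_mono inf_le_left
        · exact (hm_mono inf_le_right).trans (hm_sup b c).le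
    _ = e ((m a ⊓ m b) ⊔ (m a ⊓ m c)) := by rw [inf_sup_left]
    _ = e (m a ⊓ m b) ⊔ e (m a ⊓ m c) := he_sup _ _
    _ ≤ (a ⊓ b) ⊔ (a ⊓ c) := by
        refine sup_le_sup ?_ ?_ <;>
        · refine le_inf ?_ ?_
          · exact (he_mono inf_le_left).trans (hem a).le
          · exact (he_mono inf_le_right).trans (hem _).le
end

section
/- Define the dependency relation of a regular language L by DR_L(u⁻¹L, v⁻¹rev(L)) iff u·rev(v) ∈ L, for u, v ∈ Σ* (this is well defined on derivatives). Define dr_L(K) = (Σ* \ rev(K))⁻¹L for K a left quotient of rev(L). Then for all u, v ∈ Σ*: DR_L(u⁻¹L, v⁻¹rev(L)) holds if and only if u⁻¹L ⊄ dr_L(v⁻¹rev(L)), i.e., u⁻¹L is not a subset of ⋃{K ∈ LD(L) : rev(v) ∉ K} where LD(L) is the set of left derivatives of L. -/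
/-- The left quotient `U⁻¹L = ⋃_{u ∈ U} u⁻¹L`. -/
def leftQuot {α : Type*} (U : Set (List α)) (L : Set (List α)) : Set (List α) :=
  ⋃ u ∈ U, leftDeriv u L

/-- The reverse language `rev(L) = {rev w : w ∈ L}`. -/
def revLang {α : Type*} (L : Set (List α)) : Set (List α) :=
  List.reverse '' L

lemma mem_revLang {α : Type*} {L : Set (List α)} {w : List α} :
    w ∈ revLang L ↔ w.reverse ∈ L := by
  constructor
  · rintro ⟨x, hx, rfl⟩; simpa using hx
  · intro h; exact ⟨w.reverse, h, by simp⟩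

lemma mem_deriv_rev {α : Type*} {L : Set (List α)} (u v : List α) :
    u ++ v.reverse ∈ L ↔ u.reverse ∈ leftDeriv v (revLang L) := by
  simp [leftDeriv, mem_revLang]

lemma key_set {α : Type*} (L : Set (List α)) (v : List α) :
    (revLang (leftDeriv v (revLang L)))ᶜ = {y : List α | v.reverse ∉ leftDeriv y L} := by
  ext y
  simp only [Set.mem_compl_iff, mem_revLang, Set.mem_setOf_eq]
  rw [← mem_deriv_rev]
  rfl

lemma not_subset_iff {α : Type*} (L : Set (List α)) (u v : List α) :
    u ++ v.reverse ∈ L ↔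
      ¬ leftDeriv u L ⊆ ⋃ y ∈ {y : List α | v.reverse ∉ leftDeriv y L}, leftDeriv y L := by
  constructor
  · intro h hsub
    have hu : v.reverse ∈ leftDeriv u L := h
    have := hsub hu
    simp only [Set.mem_iUnion, Set.mem_setOf_eq] at this
    obtain ⟨y, hy, hmem⟩ := this
    exact hy hmem
  · intro h
    by_contra hne
    apply h
    intro w hw
    exact Set.mem_biUnion (by exact hne : v.reverse ∉ leftDeriv u L) hw

/-- The dependency relation `DR_L(u⁻¹L, v⁻¹rev L) ⟺ u·rev v ∈ L` of a regular language
is well defined on derivatives, and `DR_L(u⁻¹L, v⁻¹rev L)` holds iff `u⁻¹L` is not a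
subset of `dr_L(v⁻¹rev L) = (Σ* \ rev(v⁻¹rev L))⁻¹L`, equivalently iff `u⁻¹L` is not a
subset of `⋃ {K ∈ LD(L) : rev v ∉ K}`. -/
theorem dependency_iff_not_subset {α : Type*} (L : Set (List α))
    (hreg : ∃ (n : ℕ) (M : DFA α (Fin n)), ∀ w : List α, w ∈ M.accepts ↔ w ∈ L) :
    (∀ u u' v v' : List α, leftDeriv u L = leftDeriv u' L →
      leftDeriv v (revLang L) = leftDeriv v' (revLang L) →
      (u ++ v.reverse ∈ L ↔ u' ++ v'.reverse ∈ L)) ∧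
    (∀ u v : List α,
      u ++ v.reverse ∈ L ↔
        ¬ leftDeriv u L ⊆ leftQuot ((revLang (leftDeriv v (revLang L)))ᶜ) L) ∧
    (∀ u v : List α,
      u ++ v.reverse ∈ L ↔
        ¬ leftDeriv u L ⊆ ⋃ y ∈ {y : List α | v.reverse ∉ leftDeriv y L}, leftDeriv y L) := by
  refine ⟨?_, ?_, fun u v => not_subset_iff L u v⟩
  · intro u u' v v' hu hv
    have h1 : (u ++ v.reverse ∈ L) = (v.reverse ∈ leftDeriv u L) := rfl
    have h2 : (u' ++ v'.reverse ∈ L) = (v'.reverse ∈ leftDeriv u' L) := rfl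
    rw [h1, h2, ← hu]
    show u ++ v.reverse ∈ L ↔ u ++ v'.reverse ∈ L
    rw [mem_deriv_rev, mem_deriv_rev, hv]
  · intro u v
    rw [not_subset_iff L u v]
    unfold leftQuot
    rw [key_set]
end

section
/- Let C be a finite family of subsets of a finite set Y, and let ⟨C⟩ ⊆ P(Y) be the closure of C under finite unions (a finite join-semilattice under ∪, with bottom ∅). Then C has a set basis of size at most k (i.e., a family B ⊆ P(Y) with |B| ≤ k such that every member of C is a union of members of B) if and only if there exists a finite join-semilattice S with at most k join-irreducible elements and an injective join-semilattice morphism ⟨C⟩ ↪ S. -/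
/-- A bundled finite join-semilattice (with bottom). -/
structure FinJSL where
  carrier : Type
  [fintype : Fintype carrier]
  [sl : SemilatticeSup carrier]
  [obot : OrderBot carrier]

attribute [instance] FinJSL.fintype FinJSL.sl FinJSL.obot

/-- Closure of a family of sets under finite unions. -/
abbrev closJSL {Y : Type} (C : Set (Set Y)) : Set (Set Y) :=
  {N : Set Y | ∃ s : Finset (Set Y), ↑s ⊆ C ∧ N = s.sup id}

lemma closJSL_empty {Y : Type} (C : Set (Set Y)) : (∅ : Set Y) ∈ closJSL C :=
  ⟨∅, by simp⟩

lemma closJSL_mem {Y : Type} {C : Set (Set Y)} {M : Set Y} (h : M ∈ C) : M ∈ closJSL C :=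
  ⟨{M}, by simp [h]⟩

lemma closJSL_union {Y : Type} {C : Set (Set Y)} {M M' : Set Y}
    (h : M ∈ closJSL C) (h' : M' ∈ closJSL C) : M ∪ M' ∈ closJSL C := by
  classical
  obtain ⟨s, hs, rfl⟩ := h
  obtain ⟨s', hs', rfl⟩ := h'
  refine ⟨s ∪ s', ?_, ?_⟩
  · rw [Finset.coe_union]; exact Set.union_subset hs hs'
  · rw [Finset.sup_union]; rfl

lemma closJSL_finsetSup {Y : Type} {C : Set (Set Y)} {α : Type*} (u : Finset α) (g : α → Set Y)
    (h : ∀ x ∈ u, g x ∈ closJSL C) : u.sup g ∈ closJSL C := by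
  classical
  induction u using Finset.induction with
  | empty => simpa using closJSL_empty C
  | insert _ _ hx ih =>
    rw [Finset.sup_insert]
    exact closJSL_union (h _ (Finset.mem_insert_self _ _))
      (ih fun x hxu => h x (Finset.mem_insert_of_mem hxu))

lemma closJSL_mono_f {Y : Type} {C : Set (Set Y)} {γ : Type*} [SemilatticeSup γ]
    (f : Set Y → γ)
    (hf : ∀ M ∈ closJSL C, ∀ M' ∈ closJSL C, f (M ∪ M') = f M ⊔ f M')
    {M N : Set Y} (hM : M ∈ closJSL C) (hN : N ∈ closJSL C) (hMN : M ⊆ N) :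
    f M ≤ f N := by
  have : f (M ∪ N) = f M ⊔ f N := hf M hM N hN
  rw [Set.union_eq_self_of_subset_left hMN] at this
  exact le_sup_left.trans this.ge

open Classical in
/-- Every element of a finite join-semilattice is the sup of the irreducibles below it. -/
lemma finJSL_sup_irred {α : Type*} [Fintype α] [SemilatticeSup α] [OrderBot α] (a : α) :
    (Finset.univ.filter (fun j => SupIrred j ∧ j ≤ a)).sup id = a := by
  classical
  apply le_antisymm (Finset.sup_le fun j hj => (Finset.mem_filter.1 hj).2.2)
  obtain ⟨t, hts, hirr⟩ := exists_supIrred_decomposition a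
  conv_lhs => rw [← hts]
  refine Finset.sup_le fun b hb => ?_
  exact Finset.le_sup (f := id)
    (Finset.mem_filter.2 ⟨Finset.mem_univ _, hirr hb, hts ▸ Finset.le_sup (f := id) hb⟩)

set_option maxHeartbeats 1000000 in
open Classical in
theorem setBasis_iff_embedding {Y : Type} [Fintype Y] (C : Set (Set Y)) (k : ℕ) :
    (∃ B : Finset (Set Y), B.card ≤ k ∧
      ∀ M ∈ C, ∃ s : Finset (Set Y), ↑s ⊆ (B : Set (Set Y)) ∧ M = s.sup id) ↔
    (∃ (S : FinJSL) (f : Set Y → S.carrier),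
      Set.InjOn f {N : Set Y | ∃ s : Finset (Set Y), ↑s ⊆ C ∧ N = s.sup id} ∧
      f ∅ = ⊥ ∧
      (∀ M ∈ {N : Set Y | ∃ s : Finset (Set Y), ↑s ⊆ C ∧ N = s.sup id},
        ∀ M' ∈ {N : Set Y | ∃ s : Finset (Set Y), ↑s ⊆ C ∧ N = s.sup id},
          f (M ∪ M') = f M ⊔ f M') ∧
      {j : S.carrier | SupIrred j}.ncard ≤ k) := by
  classical
  constructor
  · rintro ⟨B, hBk, hB⟩
    set GB := closJSL ((B : Set (Set Y))) with hGBdef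
    have hsub : closJSL C ⊆ GB := by
      rintro N ⟨s, hs, rfl⟩
      exact closJSL_finsetSup s id fun x hx => by
        obtain ⟨t, ht, hxt⟩ := hB x (hs hx)
        exact ⟨t, ht, hxt⟩
    letI sl : SemilatticeSup {N : Set Y // N ∈ GB} :=
      Subtype.semilatticeSup fun x y hx hy => closJSL_union hx hy
    letI ob : OrderBot {N : Set Y // N ∈ GB} :=
      Subtype.orderBot (Set.bot_eq_empty ▸ closJSL_empty _)
    letI ft : Fintype {N : Set Y // N ∈ GB} := Fintype.ofFinite _
    refine ⟨⟨{N : Set Y // N ∈ GB}⟩,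
      fun M => if h : M ∈ GB then ⟨M, h⟩ else ⊥, ?_, ?_, ?_, ?_⟩
    · intro M hM M' hM' heq
      simp only [dif_pos (hsub hM), dif_pos (hsub hM')] at heq
      exact congrArg Subtype.val heq
    · simp only [dif_pos (show (∅ : Set Y) ∈ GB from closJSL_empty ((B : Set (Set Y))))]
      exact Subtype.ext Set.bot_eq_empty.symm
    · intro M hM M' hM'
      simp only [dif_pos (hsub hM), dif_pos (hsub hM'),
        dif_pos (show M ∪ M' ∈ GB from closJSL_union (hsub hM) (hsub hM'))]
      rfl
    · have hval : ∀ j : {N : Set Y // N ∈ GB}, SupIrred j →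
          (j : Set Y) ∈ (B : Set (Set Y)) := by
        intro j hj
        obtain ⟨t, ht, hjt⟩ := j.2
        have htmem : ∀ x ∈ t, x ∈ GB := fun x hx => closJSL_mem (ht hx)
        set t' : Finset {N : Set Y // N ∈ GB} :=
          t.attach.image (fun x => ⟨x.1, htmem x.1 x.2⟩) with ht'
        have hsup' : t'.sup id = j := by
          apply Subtype.ext
          have hcomp : (Subtype.val (t'.sup id) : Set Y) = t'.sup (fun x => (x : Set Y)) :=
            Finset.comp_sup_eq_sup_comp Subtype.val (fun _ _ => rfl) rfl
          calc (Subtype.val (t'.sup id) : Set Y)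
              = t.attach.sup (fun x => (x.1 : Set Y)) := by
                rw [hcomp, ht', Finset.sup_image]; rfl
            _ = t.sup id := Finset.sup_attach t id
            _ = j := hjt.symm
        obtain ⟨i, hi, hij⟩ := hj.finset_sup_eq hsup'
        have : (j : Set Y) ∈ t := by
          rw [← hij]
          simp only [ht', Finset.mem_image, Finset.mem_attach, true_and] at hi
          obtain ⟨x, hx⟩ := hi
          rw [id, ← hx]
          exact x.2
        exact ht this
      calc {j : {N : Set Y // N ∈ GB} | SupIrred j}.ncard
          ≤ ((B : Set (Set Y))).ncard := by
            refine Set.ncard_le_ncard_of_injOn (fun j => (j : Set Y))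
              (fun j hj => hval j hj) (Subtype.val_injective.injOn) B.finite_toSet
        _ = B.card := Set.ncard_coe_finset B
        _ ≤ k := hBk
  · rintro ⟨S, f, hinj, hbot, hsup, hcard⟩
    have hmono : ∀ {M N : Set Y}, M ∈ closJSL C → N ∈ closJSL C → M ⊆ N → f M ≤ f N :=
      fun hM hN hMN => closJSL_mono_f f hsup hM hN hMN
    set bf : S.carrier → Set Y := fun j => ⋂₀ {N | N ∈ closJSL C ∧ j ≤ f N} with hbf
    have key : ∀ M ∈ closJSL C,
        M = ((Finset.univ.filter (fun j => SupIrred j ∧ j ≤ f M)).image bf).sup id := by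
      intro M hM
      set F := Finset.univ.filter (fun j : S.carrier => SupIrred j ∧ j ≤ f M) with hF
      apply Set.Subset.antisymm
      · intro y hy
        by_contra hys
        have hex : ∀ j ∈ F, ∃ N, N ∈ closJSL C ∧ j ≤ f N ∧ y ∉ N := by
          intro j hj
          by_contra hc
          push_neg at hc
          have hybj : y ∈ bf j := Set.mem_sInter.2 fun N hN => hc N hN.1 hN.2
          exact hys (Finset.le_sup (f := id) (Finset.mem_image_of_mem bf hj) hybj)
        choose! g hg1 hg2 hg3 using hex
        set N := F.sup g with hN
        have hNmem : N ∈ closJSL C := closJSL_finsetSup F g hg1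
        have hfMN : f M ≤ f N := by
          conv_lhs => rw [← finJSL_sup_irred (f M)]
          refine Finset.sup_le fun j hj => ?_
          exact (hg2 j hj).trans (hmono (hg1 j hj) hNmem (Finset.le_sup hj))
        have hMN : M ∪ N = N := by
          refine hinj (closJSL_union hM hNmem) hNmem ?_
          rw [hsup M hM N hNmem]
          exact sup_eq_right.2 hfMN
        have hyN : y ∈ N := hMN ▸ Set.mem_union_left N hy
        rw [hN, Finset.sup_set_eq_biUnion] at hyN
        obtain ⟨j, hjF, hyj⟩ := Set.mem_iUnion₂.1 hyN
        exact hg3 j hjF hyj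
      · refine Finset.sup_le fun x hx => ?_
        obtain ⟨j, hj, rfl⟩ := Finset.mem_image.1 hx
        exact Set.sInter_subset_of_mem ⟨hM, (Finset.mem_filter.1 hj).2.2⟩
    refine ⟨(Finset.univ.filter (fun j : S.carrier => SupIrred j)).image bf, ?_, ?_⟩
    · refine Finset.card_image_le.trans ?_
      have : (Finset.univ.filter (fun j : S.carrier => SupIrred j)).card =
          {j : S.carrier | SupIrred j}.ncard := by
        rw [Set.ncard_eq_toFinset_card', Set.toFinset_setOf]
      rw [this]; exact hcard
    · intro M hMC
      refine ⟨(Finset.univ.filter (fun j => SupIrred j ∧ j ≤ f M)).image bf, ?_, ?_⟩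
      · intro x hx
        simp only [Finset.coe_image, Set.mem_image, Finset.mem_coe, Finset.mem_filter,
          Finset.mem_univ, true_and] at hx ⊢
        obtain ⟨j, hj, rfl⟩ := hx
        exact ⟨j, hj.1, rfl⟩
      · exact key M (closJSL_mem hMC)
end
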